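/- Let s ∈ (0,1), α ∈ (0,1), c > 0. For d > 1/2 and ε > 0 define f(d) := (2/s)[ 2 d^{−s} − (d − 1/2)^{−s} − (d + 1/2)^{−s} ] + (c ε/(1−α))[ 2 d^{1−α} − (d − 1/2)^{1−α} − (d + 1/2)^{1−α} ], and set d_ε := ((1+s)/(c α ε))^{1/(1+s−α)}. Then there exists ε̄ = ε̄(s, α, c) > 0 such that for every ε ∈ (0, ε̄) one has f(d_ε) ≤ −(c α ε / 8) · d_ε^{−1−α} < 0. -/

import Mathlib

/-!
For large `d`, `2 d^p - (d - 1/2)^p - (d + 1/2)^p` is minus a second difference of `x ↦ x^p`,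
hence `≈ -p(p-1)/4 · d^(p-2)`. The choice of `d_ε` is exactly `c α ε d_ε^(1+s-α) = 1 + s`, which
puts both terms of `d_ε^(2+s) f(d_ε)` at order one, with limits `-(1+s)/2` and `(1+s)/4`.
Their sum `-(1+s)/4` lies below `-(1+s)/8 = d_ε^(2+s) · (-(cαε/8) d_ε^(-1-α))` once `ε` is small.
-/

open Set Filter Topology

noncomputable section

/-- The function `f(d) = ζ_E(1/2) - ζ_E(0)` computed explicitly for
`E = (0,1/2) ∪ (d,d+1/2)`. -/
def fEL (s α c ε d : ℝ) : ℝ :=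
  (2 / s) * (2 * d ^ (-s) - (d - 1 / 2) ^ (-s) - (d + 1 / 2) ^ (-s))
    + (c * ε / (1 - α)) *
        (2 * d ^ (1 - α) - (d - 1 / 2) ^ (1 - α) - (d + 1 / 2) ^ (1 - α))

theorem tendsto_symmetric_second_difference_div_sq {f f' : ℝ → ℝ} {x f'' : ℝ}
    (hf : ∀ᶠ y in 𝓝 x, HasDerivAt f (f' y) y) (hf' : HasDerivAt f' f'' x) :
    Tendsto (fun u => (f (x + u) + f (x - u) - 2 * f x) / u ^ 2) (𝓝[>] 0) (𝓝 f'') := by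
  have hplus : Tendsto (fun u : ℝ => x + u) (𝓝[>] 0) (𝓝 x) :=
    ((continuous_const.add continuous_id).tendsto' 0 x (add_zero x)).mono_left
      nhdsWithin_le_nhds
  have hminus : Tendsto (fun u : ℝ => x - u) (𝓝[>] 0) (𝓝 x) :=
    ((continuous_const.sub continuous_id).tendsto' 0 x (sub_zero x)).mono_left
      nhdsWithin_le_nhds
  have hnum : ∀ᶠ u in 𝓝[>] 0, HasDerivAt (fun u => f (x + u) + f (x - u) - 2 * f x)
      (f' (x + u) - f' (x - u)) u := by
    filter_upwards [hplus.eventually hf, hminus.eventually hf] with u h₁ h₂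
    have := ((h₁.comp u ((hasDerivAt_id u).const_add x)).add
      (h₂.comp u ((hasDerivAt_id u).const_sub x))).sub_const (2 * f x)
    simpa [Function.comp_def, sub_eq_add_neg] using this
  have hcont : ContinuousAt f x := hf.self_of_nhds.continuousAt
  have hnum0 : Tendsto (fun u => f (x + u) + f (x - u) - 2 * f x) (𝓝[>] 0) (𝓝 0) := by
    have := ((hcont.tendsto.comp hplus).add (hcont.tendsto.comp hminus)).sub_const (2 * f x)
    simpa [two_mul] using this
  have hden0 : Tendsto (fun u : ℝ => u ^ 2) (𝓝[>] 0) (𝓝 0) :=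
    ((continuous_pow 2).tendsto' 0 0 (by norm_num)).mono_left nhdsWithin_le_nhds
  have hslope := hasDerivAt_iff_tendsto_slope_zero.mp hf'
  have hslope_pos : Tendsto (fun u : ℝ => u⁻¹ • (f' (x + u) - f' x)) (𝓝[>] 0) (𝓝 f'') :=
    hslope.mono_left (nhdsWithin_mono _ fun u hu => ne_of_gt hu)
  have hneg : Tendsto (fun u : ℝ => -u) (𝓝[>] 0) (𝓝[≠] 0) := by
    refine tendsto_nhdsWithin_iff.mpr ⟨?_, ?_⟩
    · simpa using (tendsto_neg (0 : ℝ)).mono_left nhdsWithin_le_nhds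
    · filter_upwards [self_mem_nhdsWithin] with u (hu : 0 < u)
      simpa using hu.ne'
  have hslope_neg := hslope.comp hneg
  have hquot : Tendsto (fun u => (f' (x + u) - f' (x - u)) / (2 * u)) (𝓝[>] 0) (𝓝 f'') := by
    have := (hslope_pos.add hslope_neg).div_const 2
    rw [add_self_div_two] at this
    refine this.congr' ?_
    filter_upwards [self_mem_nhdsWithin] with u (hu : 0 < u)
    simp only [Function.comp_apply, smul_eq_mul, ← sub_eq_add_neg]
    field_simp
    ring
  refine HasDerivAt.lhopital_zero_nhdsGT hnum
    (Eventually.of_forall fun u => by simpa using hasDerivAt_pow 2 u) ?_ hnum0 hden0 hquot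
  filter_upwards [self_mem_nhdsWithin] with u (hu : 0 < u)
  positivity

theorem tendsto_rpow_second_difference_div_sq (p : ℝ) :
    Tendsto (fun u : ℝ => ((1 + u) ^ p + (1 - u) ^ p - 2) / u ^ 2) (𝓝[>] 0)
      (𝓝 (p * (p - 1))) := by
  have hf : ∀ᶠ y in 𝓝 (1 : ℝ), HasDerivAt (fun y => y ^ p) (p * y ^ (p - 1)) y := by
    filter_upwards [eventually_ne_nhds (one_ne_zero : (1 : ℝ) ≠ 0)] with y hy
    exact Real.hasDerivAt_rpow_const (Or.inl hy)
  have hf' : HasDerivAt (fun y : ℝ => p * y ^ (p - 1)) (p * (p - 1)) 1 := by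
    simpa using
      (Real.hasDerivAt_rpow_const (x := 1) (p := p - 1) (Or.inl one_ne_zero)).const_mul p
  simpa using tendsto_symmetric_second_difference_div_sq hf hf'

def negSecondDiffRpow (p d : ℝ) : ℝ := 2 * d ^ p - (d - 1 / 2) ^ p - (d + 1 / 2) ^ p

/-- Homogeneity of `x ↦ x ^ p` turns the step-`1/2` difference at `d` into the
step-`1/(2d)` difference at `1`. -/
theorem tendsto_rpow_mul_negSecondDiffRpow_atTop (p : ℝ) :
    Tendsto (fun d => d ^ (2 - p) * negSecondDiffRpow p d) atTop (𝓝 (-(p * (p - 1)) / 4)) := by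
  have hstep : Tendsto (fun d : ℝ => 1 / (2 * d)) atTop (𝓝[>] 0) := by
    refine tendsto_nhdsWithin_iff.mpr ⟨?_, ?_⟩
    · exact tendsto_const_nhds.div_atTop (tendsto_id.const_mul_atTop two_pos)
    · filter_upwards [eventually_gt_atTop (0 : ℝ)] with d hd
      exact one_div_pos.mpr (by positivity : (0 : ℝ) < 2 * d)
  have := ((tendsto_rpow_second_difference_div_sq p).comp hstep).const_mul (-(1 / 4))
  rw [show -(1 / 4) * (p * (p - 1)) = -(p * (p - 1)) / 4 by ring] at this
  refine this.congr' ?_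
  filter_upwards [eventually_ge_atTop 1] with d hd
  have hd0 : 0 < d := by linarith
  have hu : 1 / (2 * d) ≤ 1 / 2 := by gcongr; linarith
  have hminus : (d - 1 / 2) ^ p = d ^ p * (1 - 1 / (2 * d)) ^ p := by
    rw [← Real.mul_rpow hd0.le (by linarith)]; congr 1; field_simp
  have hplus : (d + 1 / 2) ^ p = d ^ p * (1 + 1 / (2 * d)) ^ p := by
    rw [← Real.mul_rpow hd0.le (by positivity)]; congr 1; field_simp
  have hsq : d ^ (2 - p) * d ^ p = d ^ 2 := by
    rw [← Real.rpow_add hd0, sub_add_cancel, Real.rpow_two]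
  simp only [Function.comp_apply, negSecondDiffRpow, hminus, hplus]
  rw [one_div_pow, div_div_eq_mul_div, div_one]
  linear_combination ((1 + 1 / (2 * d)) ^ p + (1 - 1 / (2 * d)) ^ p - 2) * hsq

theorem fEL_eq (s α c ε d : ℝ) :
    fEL s α c ε d = 2 / s * negSecondDiffRpow (-s) d
      + c * ε / (1 - α) * negSecondDiffRpow (1 - α) d := rfl

def fELBalanced (s α d : ℝ) : ℝ :=
  2 / s * (d ^ (2 + s) * negSecondDiffRpow (-s) d)
    + (1 + s) / (α * (1 - α)) * (d ^ (1 + α) * negSecondDiffRpow (1 - α) d)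

theorem tendsto_fELBalanced_atTop {s α : ℝ} (hs : s ≠ 0) (hα₀ : α ≠ 0) (hα₁ : α ≠ 1) :
    Tendsto (fELBalanced s α) atTop (𝓝 (-(1 + s) / 4)) := by
  have hA := tendsto_rpow_mul_negSecondDiffRpow_atTop (-s)
  have hB := tendsto_rpow_mul_negSecondDiffRpow_atTop (1 - α)
  rw [sub_neg_eq_add] at hA
  rw [show (2 : ℝ) - (1 - α) = 1 + α by ring] at hB
  have hα₁' : 1 - α ≠ 0 := sub_ne_zero.mpr (Ne.symm hα₁)
  have hlim : 2 / s * (-(-s * (-s - 1)) / 4)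
      + (1 + s) / (α * (1 - α)) * (-((1 - α) * (1 - α - 1)) / 4) = -(1 + s) / 4 := by
    field_simp
    ring
  rw [← hlim]
  exact (hA.const_mul (2 / s)).add (hB.const_mul ((1 + s) / (α * (1 - α))))

theorem rpow_mul_fEL_of_balance {s α c ε d : ℝ} (hα : α ≠ 0) (hd : 0 < d)
    (hbal : c * α * ε * d ^ (1 + s - α) = 1 + s) :
    d ^ (2 + s) * fEL s α c ε d = fELBalanced s α d := by
  have hsplit : d ^ (2 + s) = d ^ (1 + s - α) * d ^ (1 + α) := by
    rw [← Real.rpow_add hd]; ring_nf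
  have hcoef : c * ε * d ^ (2 + s) = (1 + s) / α * d ^ (1 + α) := by
    rw [hsplit, div_mul_eq_mul_div, eq_div_iff hα]
    linear_combination d ^ (1 + α) * hbal
  rw [fEL_eq, fELBalanced, ← div_div]
  linear_combination (negSecondDiffRpow (1 - α) d / (1 - α)) * hcoef

theorem fEL_le_of_balance {s α c ε d : ℝ} (hα : α ≠ 0) (hd : 0 < d)
    (hbal : c * α * ε * d ^ (1 + s - α) = 1 + s) (h : fELBalanced s α d ≤ -(1 + s) / 8) :
    fEL s α c ε d ≤ -(c * α * ε / 8) * d ^ (-1 - α) := by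
  have hscale : d ^ (2 + s) * (-(c * α * ε / 8) * d ^ (-1 - α)) = -(1 + s) / 8 := by
    have : d ^ (2 + s) * d ^ (-1 - α) = d ^ (1 + s - α) := by
      rw [← Real.rpow_add hd]; ring_nf
    linear_combination (-(c * α * ε) / 8) * this - hbal / 8
  refine le_of_mul_le_mul_left ?_ (Real.rpow_pos_of_pos hd (2 + s))
  rw [rpow_mul_fEL_of_balance hα hd hbal, hscale]
  exact h

theorem tendsto_div_mul_rpow_nhdsGT_zero_atTop {a b q : ℝ} (ha : 0 < a) (hb : 0 < b)
    (hq : 0 < q) : Tendsto (fun ε => (a / (b * ε)) ^ q) (𝓝[>] 0) atTop := by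
  have h : Tendsto (fun ε : ℝ => a / b * ε⁻¹) (𝓝[>] 0) atTop :=
    tendsto_inv_nhdsGT_zero.const_mul_atTop (div_pos ha hb)
  exact (tendsto_rpow_atTop hq).comp (h.congr fun ε => by ring)

theorem stmt15 (s α c : ℝ) (hs : s ∈ Ioo (0 : ℝ) 1) (hα : α ∈ Ioo (0 : ℝ) 1) (hc : 0 < c) :
    ∃ εbar : ℝ, 0 < εbar ∧ ∀ ε ∈ Ioo (0 : ℝ) εbar,
      fEL s α c ε (((1 + s) / (c * α * ε)) ^ (1 / (1 + s - α)))
          ≤ -(c * α * ε / 8) * (((1 + s) / (c * α * ε)) ^ (1 / (1 + s - α))) ^ (-1 - α) ∧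
      fEL s α c ε (((1 + s) / (c * α * ε)) ^ (1 / (1 + s - α))) < 0 := by
  obtain ⟨hs₀, -⟩ := hs
  obtain ⟨hα₀, hα₁⟩ := hα
  have hq : 0 < 1 + s - α := by linarith
  set D : ℝ → ℝ := fun ε => ((1 + s) / (c * α * ε)) ^ (1 / (1 + s - α))
  have hbal : ∀ ε > 0, c * α * ε * D ε ^ (1 + s - α) = 1 + s := fun ε hε => by
    have : 0 < c * α * ε := by positivity
    rw [← Real.rpow_mul (by positivity), one_div_mul_cancel hq.ne', Real.rpow_one]
    field_simp
  have hD : Tendsto D (𝓝[>] 0) atTop :=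
    tendsto_div_mul_rpow_nhdsGT_zero_atTop (by positivity) (by positivity) (by positivity)
  have hbound : ∀ᶠ ε in 𝓝[>] 0, fEL s α c ε (D ε) ≤ -(c * α * ε / 8) * D ε ^ (-1 - α) := by
    have hlt : -(1 + s) / 4 < -(1 + s) / 8 := by linarith
    have hG := (tendsto_fELBalanced_atTop hs₀.ne' hα₀.ne' hα₁.ne).comp hD
    filter_upwards [hG.eventually_lt_const hlt, self_mem_nhdsWithin] with ε hε (hε₀ : 0 < ε)
    exact fEL_le_of_balance hα₀.ne' (by positivity) (hbal ε hε₀) hε.le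
  obtain ⟨εbar, hεbar, hsub⟩ := mem_nhdsGT_iff_exists_Ioo_subset.mp hbound
  refine ⟨εbar, hεbar, fun ε hε => ⟨hsub hε, (hsub hε).trans_lt ?_⟩⟩
  have : 0 < ε := hε.1
  have : 0 < D ε := by positivity
  exact mul_neg_of_neg_of_pos (by simp only [neg_lt_zero]; positivity) (by positivity)
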